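/- Suppose assumptions (A1), (A2), and (A3) hold. Then there exists a constant C > 0, depending only on γ, α, the constants of (A1)–(A2), and on the C² norm of V, such that for every 0 < ε ≤ 1 and every solution (u, m) of Problem 1, the second-order estimate ∫₀¹ (H''(u')·(u'')²·m + α·m^{α−1}·(m')²) dx + ε ∫₀¹ ((m')² + (m'')² + (u')² + (u'')²) dx ≤ C holds. Moreover, if in addition H is convex (assumption (A4)), then ∫₀¹ α·m^{α−1}·(m')² dx + ε ∫₀¹ ((m')² + (m'')² + (u')² + (u'')²) dx ≤ C. -/

import Mathlib

/-!
Testing the first equation against `m - 1` and the second against `u`, and integrating by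
parts over a period, expresses `∫ m^α (m - 1)` plus nonnegative `ε`-terms through
`∫ ((u' H'(u') - H(u')) m - H(u') + V (m - 1))`. The lower bounds in (A1) and (A2) and the
superlinear growth of `m^α (m - 1)` then bound the mass `∫ m`. Testing instead against `m''`
and `u''` turns the left-hand side of the estimate into `-∫ V'' m ≤ ‖V''‖∞ ∫ m`. Convexity
of `H` makes the term `H''(u') u''² m` nonnegative, which gives the second estimate.
-/

open Set intervalIntegral

noncomputable section

/-- `f : ℝ → ℝ` is ½-Hölder continuous: there is `K ≥ 0` with
`|f x - f y| ≤ K * |x - y| ^ (1/2)` for all `x y`. -/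
def IsHolderHalf (f : ℝ → ℝ) : Prop :=
  ∃ K : ℝ, 0 ≤ K ∧ ∀ x y : ℝ, |f x - f y| ≤ K * |x - y| ^ ((1 : ℝ) / 2)

/-- `f` is a 1-periodic function of class `C²` (a `C²` function on the torus `𝕋`). -/
def MemC2T (f : ℝ → ℝ) : Prop :=
  Function.Periodic f 1 ∧ ContDiff ℝ 2 f

/-- `f ∈ C^{2,1/2}(𝕋)`: 1-periodic, of class `C²`, with ½-Hölder continuous
second derivative. -/
def MemC2HalfT (f : ℝ → ℝ) : Prop :=
  MemC2T f ∧ IsHolderHalf (deriv (deriv f))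

/-- `(u, m)` is a solution of Problem 1 with Hamiltonian `H`, potential `V`,
exponent `α` and parameter `ε`: `u, m` are 1-periodic `C²` functions, `m > 0`
everywhere, and the system
`u - u'' + H(u') + V = m^α + ε (m - m'')`,
`m - m'' - (H'(u') m)' = 1 - ε (u - u'')`
holds pointwise. -/
def SolvesMFG (H V : ℝ → ℝ) (α ε : ℝ) (u m : ℝ → ℝ) : Prop :=
  MemC2T u ∧ MemC2T m ∧ (∀ x, 0 < m x) ∧
  (∀ x : ℝ, u x - deriv (deriv u) x + H (deriv u x) + V x
      = m x ^ α + ε * (m x - deriv (deriv m) x)) ∧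
  (∀ x : ℝ, m x - deriv (deriv m) x
      - deriv (fun y => deriv H (deriv u y) * m y) x
      = 1 - ε * (u x - deriv (deriv u) x))

/-- A bound `KV` on the `C²` norm of `V`. -/
def C2NormBound (KV : ℝ) (V : ℝ → ℝ) : Prop :=
  ∀ x : ℝ, |V x| ≤ KV ∧ |deriv V x| ≤ KV ∧ |deriv (deriv V) x| ≤ KV

section

variable {𝕜 F : Type*} [NontriviallyNormedField 𝕜] [NormedAddCommGroup F] [NormedSpace 𝕜 F]

theorem Function.Periodic.deriv {f : 𝕜 → F} {c : 𝕜} (hf : Function.Periodic f c) :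
    Function.Periodic (deriv f) c := fun x => by
  rw [← deriv_comp_add_const, show (fun y => f (y + c)) = f from funext hf]

theorem ContDiff.hasDerivAt_deriv {f : 𝕜 → F} (hf : ContDiff 𝕜 2 f) (x : 𝕜) :
    HasDerivAt (deriv f) (deriv (deriv f) x) x :=
  ((hf.deriv' (n := 1)).differentiable one_ne_zero x).hasDerivAt

theorem ContDiff.continuous_deriv_deriv {f : 𝕜 → F} (hf : ContDiff 𝕜 2 f) :
    Continuous (deriv (deriv f)) :=
  (hf.deriv' (n := 1)).continuous_deriv le_rfl

end

theorem hasDerivAt_deriv_comp_deriv_mul {H u m : ℝ → ℝ} (hH : ContDiff ℝ 2 H)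
    (hu : ContDiff ℝ 2 u) (hm : Differentiable ℝ m) (x : ℝ) :
    HasDerivAt (fun y => deriv H (deriv u y) * m y)
      (deriv (deriv H) (deriv u x) * deriv (deriv u) x * m x + deriv H (deriv u x) * deriv m x) x :=
  ((hH.hasDerivAt_deriv _).comp x (hu.hasDerivAt_deriv x)).mul (hm x).hasDerivAt

theorem integral_eq_zero_of_hasDerivAt_of_eq {Φ f : ℝ → ℝ} {a b : ℝ}
    (hΦ : ∀ x, HasDerivAt Φ (f x) x) (hf : Continuous f) (hab : Φ b = Φ a) :
    ∫ x in a..b, f x = 0 := by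
  rw [integral_eq_sub_of_hasDerivAt (fun x _ => hΦ x) (hf.intervalIntegrable _ _), hab, sub_self]

theorem exists_sub_le_rpow_mul_sub_one {α : ℝ} (hα : 0 < α) (κ : ℝ) :
    ∃ D, ∀ t, 0 < t → κ * t - D ≤ t ^ α * (t - 1) := by
  obtain ⟨M, hM⟩ :=
    Filter.eventually_atTop.1 ((tendsto_rpow_atTop hα).eventually_ge_atTop (2 * |κ|))
  refine ⟨|κ| * max M 2 + 1, fun t ht => ?_⟩
  have hκ : κ * t ≤ |κ| * t := mul_le_mul_of_nonneg_right (le_abs_self κ) ht.le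
  rcases le_total t (max M 2) with hle | hge
  · have hlow : -1 ≤ t ^ α * (t - 1) := by
      rcases le_total t 1 with h1 | h1
      · nlinarith [Real.rpow_le_one ht.le h1 hα.le, Real.rpow_nonneg ht.le α]
      · nlinarith [Real.rpow_nonneg ht.le α]
    nlinarith [mul_le_mul_of_nonneg_left hle (abs_nonneg κ)]
  · have h1 := hM t (le_of_max_le_left hge)
    have h2 : 2 ≤ t := le_of_max_le_right hge
    have hMκ : 0 ≤ |κ| * max M 2 := mul_nonneg (abs_nonneg κ) (by positivity)
    nlinarith [mul_nonneg (abs_nonneg κ) (by linarith : (0:ℝ) ≤ t - 2),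
      mul_le_mul_of_nonneg_right h1 (by linarith : (0:ℝ) ≤ t - 1)]

theorem ConvexOn.deriv_deriv_nonneg {f : ℝ → ℝ} (hf : ConvexOn ℝ univ f)
    (hd : Differentiable ℝ f) (x : ℝ) : 0 ≤ deriv (deriv f) x :=
  (monotoneOn_univ.1 (hf.monotoneOn_deriv fun x _ => hd x)).deriv_nonneg

section

variable {H V u m : ℝ → ℝ} {α ε : ℝ}

theorem SolvesMFG.continuous_rpow (hs : SolvesMFG H V α ε u m) (β : ℝ) :
    Continuous fun x => m x ^ β :=
  hs.2.1.2.continuous.rpow_const fun x => Or.inl (hs.2.2.1 x).ne'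

theorem SolvesMFG.first_order_identity (hs : SolvesMFG H V α ε u m) (hH : ContDiff ℝ 2 H)
    (hV : Continuous V) :
    ∫ x in (0:ℝ)..1, (m x ^ α * (m x - 1)
      + ε * (m x ^ 2 - m x + deriv m x ^ 2 + u x ^ 2 + deriv u x ^ 2)
      + (deriv u x * deriv H (deriv u x) - H (deriv u x)) * m x + H (deriv u x)
      - V x * (m x - 1)) = 0 := by
  have cmα := hs.continuous_rpow α
  obtain ⟨⟨hup, hu⟩, ⟨hmp, hm⟩, -, heq1, heq2⟩ := hs
  have du x := (hu.differentiable two_ne_zero x).hasDerivAt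
  have dm x := (hm.differentiable two_ne_zero x).hasDerivAt
  have dflux := hasDerivAt_deriv_comp_deriv_mul hH hu (hm.differentiable two_ne_zero)
  -- This periodic antiderivative collects the boundary terms of the integrations by parts.
  have hΨ : ∀ x, HasDerivAt (fun x => deriv m x * u x - deriv u x * m x + deriv u x
      + deriv H (deriv u x) * m x * u x + ε * (m x * deriv m x) - ε * deriv m x
      + ε * (u x * deriv u x))
      (m x ^ α * (m x - 1)
        + ε * (m x ^ 2 - m x + deriv m x ^ 2 + u x ^ 2 + deriv u x ^ 2)
        + (deriv u x * deriv H (deriv u x) - H (deriv u x)) * m x + H (deriv u x)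
        - V x * (m x - 1)) x := fun x =>
    (((((((hm.hasDerivAt_deriv x).mul (du x)).sub ((hu.hasDerivAt_deriv x).mul (dm x))).add
      (hu.hasDerivAt_deriv x)).add ((dflux x).mul (du x))).add
      (((dm x).mul (hm.hasDerivAt_deriv x)).const_mul ε)).sub
      ((hm.hasDerivAt_deriv x).const_mul ε)).add
      (((du x).mul (hu.hasDerivAt_deriv x)).const_mul ε)
      |>.congr_deriv (by
        have e2 := heq2 x
        rw [(dflux x).deriv] at e2
        linear_combination (m x - 1) * heq1 x - u x * e2)
  have cH := hH.continuous
  have cH1 := hH.continuous_deriv one_le_two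
  have cu := hu.continuous
  have cu1 := hu.continuous_deriv one_le_two
  have cm := hm.continuous
  have cm1 := hm.continuous_deriv one_le_two
  exact integral_eq_zero_of_hasDerivAt_of_eq hΨ (by fun_prop) (by
    simp only [hup.eq, hmp.eq, hup.deriv.eq, hmp.deriv.eq])

theorem SolvesMFG.integral_le_of_lower_bounds {C1 tC1 KV D : ℝ} (hs : SolvesMFG H V α ε u m)
    (hH : ContDiff ℝ 2 H) (hV : Continuous V) (hε : 0 < ε) (hε1 : ε ≤ 1)
    (hHlow : ∀ p, -C1 ≤ H p) (hLlow : ∀ p, -tC1 ≤ p * deriv H p - H p) (hVb : ∀ x, |V x| ≤ KV)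
    (hD : ∀ t, 0 < t → (tC1 + KV + 1) * t - D ≤ t ^ α * (t - 1)) :
    ∫ x in (0:ℝ)..1, m x ≤ D + C1 + KV + 1 := by
  have hpos := hs.2.2.1
  have cH := hH.continuous
  have cH1 := hH.continuous_deriv one_le_two
  have cu := hs.1.2.continuous
  have cu1 := hs.1.2.continuous_deriv one_le_two
  have cm := hs.2.1.2.continuous
  have cm1 := hs.2.1.2.continuous_deriv one_le_two
  have cmα := hs.continuous_rpow α
  -- The coefficient `tC1 + KV + 1` absorbs the terms of the identity that are linear in `m`.
  have hpt : ∀ x, m x - (D + C1 + KV + 1) ≤ m x ^ α * (m x - 1)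
      + ε * (m x ^ 2 - m x + deriv m x ^ 2 + u x ^ 2 + deriv u x ^ 2)
      + (deriv u x * deriv H (deriv u x) - H (deriv u x)) * m x + H (deriv u x)
      - V x * (m x - 1) := fun x => by
    have hm := hpos x
    have hε' : -1 / 4 ≤ ε * (m x ^ 2 - m x + deriv m x ^ 2 + u x ^ 2 + deriv u x ^ 2) := by
      nlinarith [mul_nonneg hε.le (add_nonneg (add_nonneg (sq_nonneg (m x - 1 / 2))
        (sq_nonneg (deriv m x))) (add_nonneg (sq_nonneg (u x)) (sq_nonneg (deriv u x))))]
    have hL := mul_le_mul_of_nonneg_right (hLlow (deriv u x)) hm.le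
    have hVm := mul_le_mul_of_nonneg_right (le_abs_self (V x)) hm.le
    nlinarith [hD _ hm, hHlow (deriv u x), hVb x, neg_abs_le (V x)]
  have hmono : ∫ x in (0:ℝ)..1, (m x - (D + C1 + KV + 1)) ≤ 0 :=
    (integral_mono_on zero_le_one (Continuous.intervalIntegrable (by fun_prop) 0 1)
      (Continuous.intervalIntegrable (by fun_prop) 0 1) fun x _ => hpt x).trans_eq
      (hs.first_order_identity hH hV)
  rw [integral_sub (cm.intervalIntegrable 0 1)
    (intervalIntegrable_const (μ := MeasureTheory.volume)), integral_const] at hmono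
  simp only [sub_zero, smul_eq_mul, one_mul] at hmono
  linarith

theorem SolvesMFG.second_order_identity (hs : SolvesMFG H V α ε u m) (hH : ContDiff ℝ 2 H)
    (hV : ContDiff ℝ 2 V) (hVp : Function.Periodic V 1) :
    (∫ x in (0:ℝ)..1,
        (deriv (deriv H) (deriv u x) * (deriv (deriv u) x) ^ 2 * m x
          + α * m x ^ (α - 1) * (deriv m x) ^ 2))
      + ε * (∫ x in (0:ℝ)..1,
          ((deriv m x) ^ 2 + (deriv (deriv m) x) ^ 2
            + (deriv u x) ^ 2 + (deriv (deriv u) x) ^ 2))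
      = -∫ x in (0:ℝ)..1, deriv (deriv V) x * m x := by
  have cmα := hs.continuous_rpow (α - 1)
  obtain ⟨⟨hup, hu⟩, ⟨hmp, hm⟩, hpos, heq1, heq2⟩ := hs
  have du x := (hu.differentiable two_ne_zero x).hasDerivAt
  have dm x := (hm.differentiable two_ne_zero x).hasDerivAt
  have dV x := (hV.differentiable two_ne_zero x).hasDerivAt
  have dHu x :=
    (hH.differentiable two_ne_zero (deriv u x)).hasDerivAt.comp x (hu.hasDerivAt_deriv x)
  have dmα x := (dm x).rpow_const (p := α) (Or.inl (hpos x).ne')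
  have hΦ : ∀ x, HasDerivAt (fun x => deriv u x * m x - u x * deriv m x
      - H (deriv u x) * deriv m x - V x * deriv m x + deriv V x * m x + m x ^ α * deriv m x
      + ε * (m x * deriv m x) + ε * (u x * deriv u x) - deriv u x)
      (deriv (deriv H) (deriv u x) * (deriv (deriv u) x) ^ 2 * m x
        + α * m x ^ (α - 1) * (deriv m x) ^ 2
        + ε * ((deriv m x) ^ 2 + (deriv (deriv m) x) ^ 2
          + (deriv u x) ^ 2 + (deriv (deriv u) x) ^ 2)
        + deriv (deriv V) x * m x) x := fun x =>
    (((((((((hu.hasDerivAt_deriv x).mul (dm x)).sub ((du x).mul (hm.hasDerivAt_deriv x))).sub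
    ((dHu x).mul (hm.hasDerivAt_deriv x))).sub ((dV x).mul (hm.hasDerivAt_deriv x))).add
    ((hV.hasDerivAt_deriv x).mul (dm x))).add ((dmα x).mul (hm.hasDerivAt_deriv x))).add
    (((dm x).mul (hm.hasDerivAt_deriv x)).const_mul ε)).add
    (((du x).mul (hu.hasDerivAt_deriv x)).const_mul ε)).sub (hu.hasDerivAt_deriv x)
      |>.congr_deriv (by
        have e2 := heq2 x
        rw [(hasDerivAt_deriv_comp_deriv_mul hH hu (hm.differentiable two_ne_zero) x).deriv] at e2
        simp only [Function.comp_apply]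
        linear_combination (deriv (deriv u) x) * e2 - (deriv (deriv m) x) * heq1 x)
  have cH2 := hH.continuous_deriv_deriv
  have cu1 := hu.continuous_deriv one_le_two
  have cu2 := hu.continuous_deriv_deriv
  have cm := hm.continuous
  have cm1 := hm.continuous_deriv one_le_two
  have cm2 := hm.continuous_deriv_deriv
  have cV2 := hV.continuous_deriv_deriv
  have h0 := integral_eq_zero_of_hasDerivAt_of_eq (a := 0) (b := 1) hΦ (by fun_prop) (by
    simp only [hup.eq, hmp.eq, hVp.eq, hup.deriv.eq, hmp.deriv.eq, hVp.deriv.eq])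
  rw [integral_add, integral_add, integral_const_mul] at h0
  · linarith
  all_goals apply Continuous.intervalIntegrable; fun_prop

theorem SolvesMFG.second_order_le {KV : ℝ} (hs : SolvesMFG H V α ε u m) (hH : ContDiff ℝ 2 H)
    (hV : ContDiff ℝ 2 V) (hVp : Function.Periodic V 1)
    (hV2 : ∀ x, |deriv (deriv V) x| ≤ KV) :
    (∫ x in (0:ℝ)..1,
        (deriv (deriv H) (deriv u x) * (deriv (deriv u) x) ^ 2 * m x
          + α * m x ^ (α - 1) * (deriv m x) ^ 2))
      + ε * (∫ x in (0:ℝ)..1,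
          ((deriv m x) ^ 2 + (deriv (deriv m) x) ^ 2
            + (deriv u x) ^ 2 + (deriv (deriv u) x) ^ 2))
      ≤ KV * ∫ x in (0:ℝ)..1, m x := by
  have cm := hs.2.1.2.continuous
  have cV2 := hV.continuous_deriv_deriv
  rw [hs.second_order_identity hH hV hVp, ← integral_const_mul, ← integral_neg]
  exact integral_mono_on zero_le_one (Continuous.intervalIntegrable (by fun_prop) 0 1)
    (Continuous.intervalIntegrable (by fun_prop) 0 1) fun x _ => by
      nlinarith [neg_abs_le (deriv (deriv V) x), hV2 x, hs.2.2.1 x]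

theorem SolvesMFG.integral_le_of_convexOn (hs : SolvesMFG H V α ε u m) (hH : ContDiff ℝ 2 H)
    (hconv : ConvexOn ℝ univ H) :
    ∫ x in (0:ℝ)..1, α * m x ^ (α - 1) * (deriv m x) ^ 2
      ≤ ∫ x in (0:ℝ)..1,
        (deriv (deriv H) (deriv u x) * (deriv (deriv u) x) ^ 2 * m x
          + α * m x ^ (α - 1) * (deriv m x) ^ 2) := by
  have cH2 := hH.continuous_deriv_deriv
  have cu1 := hs.1.2.continuous_deriv one_le_two
  have cu2 := hs.1.2.continuous_deriv_deriv
  have cm := hs.2.1.2.continuous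
  have cm1 := hs.2.1.2.continuous_deriv one_le_two
  have cmα := hs.continuous_rpow (α - 1)
  exact integral_mono_on zero_le_one (Continuous.intervalIntegrable (by fun_prop) 0 1)
    (Continuous.intervalIntegrable (by fun_prop) 0 1) fun x _ => le_add_of_nonneg_left <|
      mul_nonneg (mul_nonneg (hconv.deriv_deriv_nonneg (hH.differentiable two_ne_zero) _)
        (sq_nonneg _)) (hs.2.2.1 x).le

end

theorem second_order_estimates_general
    (α γ C1 C2 C3 tC1 tC2 tC3 KV : ℝ)
    (hα : 0 < α)
    (hC2 : 0 < C2)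
    (htC2 : 0 < tC2) :
    ∃ C > 0, ∀ H V : ℝ → ℝ, ContDiff ℝ 2 H →
      Function.Periodic V 1 → ContDiff ℝ 2 V → C2NormBound KV V →
      (∀ p : ℝ, -C1 + C2 * |p| ^ γ ≤ H p ∧ H p ≤ C1 + C3 * |p| ^ γ) →
      (∀ p : ℝ, -tC1 + tC2 * |p| ^ γ ≤ p * deriv H p - H p ∧
          p * deriv H p - H p ≤ tC1 + tC3 * |p| ^ γ) →
      ∀ ε : ℝ, 0 < ε → ε ≤ 1 → ∀ u m : ℝ → ℝ, SolvesMFG H V α ε u m →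
        ((∫ x in (0:ℝ)..1,
            (deriv (deriv H) (deriv u x) * (deriv (deriv u) x) ^ 2 * m x
              + α * m x ^ (α - 1) * (deriv m x) ^ 2))
          + ε * (∫ x in (0:ℝ)..1,
              ((deriv m x) ^ 2 + (deriv (deriv m) x) ^ 2
                + (deriv u x) ^ 2 + (deriv (deriv u) x) ^ 2)) ≤ C)
        ∧ (ConvexOn ℝ Set.univ H →
            (∫ x in (0:ℝ)..1, α * m x ^ (α - 1) * (deriv m x) ^ 2)
              + ε * (∫ x in (0:ℝ)..1,
                  ((deriv m x) ^ 2 + (deriv (deriv m) x) ^ 2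
                    + (deriv u x) ^ 2 + (deriv (deriv u) x) ^ 2)) ≤ C) := by
  obtain ⟨D, hD⟩ := exists_sub_le_rpow_mul_sub_one hα (tC1 + KV + 1)
  refine ⟨max (KV * (D + C1 + KV + 1)) 1, by positivity, ?_⟩
  intro H V hH hVp hV hVb hA1 hA2 ε hε hε1 u m hs
  have hKV : 0 ≤ KV := (abs_nonneg _).trans (hVb 0).1
  have hmass := hs.integral_le_of_lower_bounds (C1 := C1) hH hV.continuous hε hε1
    (fun p => by linarith [(hA1 p).1, mul_nonneg hC2.le (Real.rpow_nonneg (abs_nonneg p) γ)])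
    (fun p => by linarith [(hA2 p).1, mul_nonneg htC2.le (Real.rpow_nonneg (abs_nonneg p) γ)])
    (fun x => (hVb x).1) hD
  have hbound := (hs.second_order_le hH hV hVp fun x => (hVb x).2.2).trans
    ((mul_le_mul_of_nonneg_left hmass hKV).trans (le_max_left _ 1))
  exact ⟨hbound, fun hconv => by linarith [hs.integral_le_of_convexOn hH hconv]⟩

/-- Under assumptions (A1)–(A3), there is a constant `C > 0`,
depending only on `γ, α`, the constants of (A1)–(A2) and on the `C²` norm of
`V`, such that for every `0 < ε ≤ 1` and every solution `(u, m)` of Problem 1,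
the second-order estimate
`∫₀¹ (H''(u') u''² m + α m^{α-1} m'²) + ε ∫₀¹ (m'² + m''² + u'² + u''²) ≤ C`
holds; moreover, if in addition `H` is convex (A4), then
`∫₀¹ α m^{α-1} m'² + ε ∫₀¹ (m'² + m''² + u'² + u''²) ≤ C`. -/
theorem second_order_estimates
    (α γ C1 C2 C3 tC1 tC2 tC3 KV : ℝ)
    (hα : 0 < α) (hγ : 1 < γ)
    (hC1 : 0 < C1) (hC2 : 0 < C2) (hC3 : 0 < C3)
    (htC1 : 0 < tC1) (htC2 : 0 < tC2) (htC3 : 0 < tC3) :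
    ∃ C > 0, ∀ H V : ℝ → ℝ, ContDiff ℝ 2 H →
      Function.Periodic V 1 → ContDiff ℝ 2 V → C2NormBound KV V →
      (∀ p : ℝ, -C1 + C2 * |p| ^ γ ≤ H p ∧ H p ≤ C1 + C3 * |p| ^ γ) →
      (∀ p : ℝ, -tC1 + tC2 * |p| ^ γ ≤ p * deriv H p - H p ∧
          p * deriv H p - H p ≤ tC1 + tC3 * |p| ^ γ) →
      ∀ ε : ℝ, 0 < ε → ε ≤ 1 → ∀ u m : ℝ → ℝ, SolvesMFG H V α ε u m →
        ((∫ x in (0:ℝ)..1,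
            (deriv (deriv H) (deriv u x) * (deriv (deriv u) x) ^ 2 * m x
              + α * m x ^ (α - 1) * (deriv m x) ^ 2))
          + ε * (∫ x in (0:ℝ)..1,
              ((deriv m x) ^ 2 + (deriv (deriv m) x) ^ 2
                + (deriv u x) ^ 2 + (deriv (deriv u) x) ^ 2)) ≤ C)
        ∧ (ConvexOn ℝ Set.univ H →
            (∫ x in (0:ℝ)..1, α * m x ^ (α - 1) * (deriv m x) ^ 2)
              + ε * (∫ x in (0:ℝ)..1,
                  ((deriv m x) ^ 2 + (deriv (deriv m) x) ^ 2
                    + (deriv u x) ^ 2 + (deriv (deriv u) x) ^ 2)) ≤ C) :=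
  second_order_estimates_general α γ C1 C2 C3 tC1 tC2 tC3 KV hα hC2 htC2
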